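/- arXiv:1812.09927 — 2 statements merged into one kernel-verified Lean document; each statement's English description precedes it below -/
import Mathlib

section
/- Let (Ω, ℱ, P) be a probability space and ℱ₁, ℱ₂, ℱ₃ sub-σ-algebras of ℱ. Suppose δ ≥ 0 satisfies φ(ℱ₁, σ(ℱ₂, ℱ₃)) ≤ δ and φ(ℱ₂, ℱ₃) ≤ δ. Then α(ℱ₂, σ(ℱ₁, ℱ₃)) ≤ 3δ. -/
/-!
Fix `B ∈ ℱ₂` and write `ν S = P (B ∩ S) - P B * P S`. For a rectangle `A ∩ C` with `A ∈ ℱ₁`,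
`C ∈ ℱ₃`,
`ν (A ∩ C) = [P (A ∩ B ∩ C) - P A * P (B ∩ C)] + P A * [P (B ∩ C) - P B * P C]
  - P B * [P (A ∩ C) - P A * P C]`,
and the φ-bounds for `(ℱ₁, σ(ℱ₂, ℱ₃))`, `(ℱ₂, ℱ₃)` and `(ℱ₁, σ(ℱ₂, ℱ₃))` bound the three brackets
by `δ P A`, `δ P B` and `δ P A`, so `|ν (A ∩ C)| ≤ 3 δ P A`. Summing over a finite
`ℱ₁`-partition gives `|ν| ≤ 3 δ` on the algebra generated by `ℱ₁ ∪ ℱ₃`. That algebra is dense in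
`σ(ℱ₁, ℱ₃)` for the pseudometric `P (s ∆ t)`, and `ν` is Lipschitz for it, so the bound extends.
-/

open MeasureTheory

/-- The φ-dependence coefficient between two sub-σ-algebras. -/
noncomputable def phiCoef {Ω : Type*} [MeasurableSpace Ω] (P : Measure Ω)
    (G H : MeasurableSpace Ω) : ℝ :=
  sSup {x | ∃ Γ Δ : Set Ω, MeasurableSet[G] Γ ∧ MeasurableSet[H] Δ ∧ P Γ ≠ 0 ∧
    x = |(P (Γ ∩ Δ)).toReal / (P Γ).toReal - (P Δ).toReal|}

/-- The α-dependence coefficient between two sub-σ-algebras. -/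
noncomputable def alphaCoef {Ω : Type*} [MeasurableSpace Ω] (P : Measure Ω)
    (G H : MeasurableSpace Ω) : ℝ :=
  sSup {x | ∃ Γ Δ : Set Ω, MeasurableSet[G] Γ ∧ MeasurableSet[H] Δ ∧
    x = |(P (Γ ∩ Δ)).toReal - (P Γ).toReal * (P Δ).toReal|}

open MeasurableSpace Set Function
open scoped symmDiff

section

variable {Ω : Type*} {mΩ : MeasurableSpace Ω}

noncomputable def indepGap (P : Measure Ω) (B S : Set Ω) : ℝ :=
  P.real (B ∩ S) - P.real B * P.real S

lemma indepGap_iUnion_fintype (P : Measure Ω) [IsFiniteMeasure P] (B : Set Ω) {ι : Type*}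
    [Fintype ι] {f : ι → Set Ω} (hd : Pairwise (Disjoint on f)) (hf : ∀ i, MeasurableSet (f i)) :
    indepGap P B (⋃ i, f i) = ∑ i, indepGap P B (f i) := by
  have hB : P.real (B ∩ ⋃ i, f i) = ∑ i, P.real (B ∩ f i) := by
    simp_rw [inter_comm B, ← measureReal_restrict_apply (MeasurableSet.iUnion hf),
      measureReal_iUnion_fintype (μ := P.restrict B) hd hf, measureReal_restrict_apply (hf _)]
  rw [indepGap, hB, measureReal_iUnion_fintype (μ := P) hd hf, Finset.mul_sum,
    ← Finset.sum_sub_distrib]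
  rfl

lemma abs_indepGap_sub_indepGap_le (P : Measure Ω) [IsFiniteMeasure P] (B : Set Ω)
    {s t : Set Ω} (hs : MeasurableSet s) (ht : MeasurableSet t) :
    |indepGap P B s - indepGap P B t| ≤ (1 + P.real B) * P.real (s ∆ t) := by
  have hinter : |P.real (B ∩ s) - P.real (B ∩ t)| ≤ P.real (s ∆ t) := by
    rw [inter_comm B, inter_comm B, ← measureReal_restrict_apply hs,
      ← measureReal_restrict_apply ht]
    exact (abs_measureReal_sub_le_measureReal_symmDiff hs.nullMeasurableSet
      ht.nullMeasurableSet).trans (ENNReal.toReal_mono (measure_ne_top _ _)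
        (Measure.restrict_apply_le _ _))
  have hwhole := abs_measureReal_sub_le_measureReal_symmDiff (μ := P) hs.nullMeasurableSet
    ht.nullMeasurableSet
  calc |indepGap P B s - indepGap P B t|
      = |(P.real (B ∩ s) - P.real (B ∩ t)) - P.real B * (P.real s - P.real t)| := by
        congr 1; unfold indepGap; ring
    _ ≤ |P.real (B ∩ s) - P.real (B ∩ t)| + P.real B * |P.real s - P.real t| :=
        (abs_sub _ _).trans_eq (by rw [abs_mul, abs_of_nonneg measureReal_nonneg])
    _ ≤ (1 + P.real B) * P.real (s ∆ t) := by
        nlinarith [hinter, hwhole, measureReal_nonneg (μ := P) (s := B)]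

lemma abs_indepGap_le_of_isSetAlgebra (P : Measure Ω) [IsFiniteMeasure P]
    {𝒜 : Set (Set Ω)} (h𝒜 : IsSetAlgebra 𝒜) (hm : generateFrom 𝒜 ≤ mΩ)
    (B : Set Ω) {c : ℝ} (hc : ∀ t ∈ 𝒜, |indepGap P B t| ≤ c)
    {s : Set Ω} (hs : MeasurableSet[generateFrom 𝒜] s) : |indepGap P B s| ≤ c := by
  obtain ⟨hmeas, happrox⟩ := Measure.MeasureDense.of_generateFrom_isSetAlgebra_finite
    (m := generateFrom 𝒜) (P.trim hm) h𝒜 rfl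
  refine le_of_forall_pos_lt_add fun ε hε => ?_
  have hB : 0 < 1 + P.real B := by positivity
  obtain ⟨t, ht, hst⟩ :=
    happrox s hs (measure_ne_top (P.trim hm) s) (ε / (1 + P.real B)) (by positivity)
  rw [trim_measurableSet_eq hm (hs.symmDiff (hmeas t ht))] at hst
  have hclose := abs_indepGap_sub_indepGap_le P B (hm _ hs) (hm _ (hmeas t ht))
  have hsmall : (1 + P.real B) * P.real (s ∆ t) < ε := by
    rw [← lt_div_iff₀' hB]; exact ENNReal.toReal_lt_of_lt_ofReal hst
  linarith [abs_sub_abs_le_abs_sub (indepGap P B s) (indepGap P B t), hc t ht]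

lemma indepGap_inter_eq (P : Measure Ω) (A B C : Set Ω) :
    indepGap P B (A ∩ C) =
      indepGap P A (B ∩ C) + P.real A * indepGap P B C - P.real B * indepGap P A C := by
  simp only [indepGap, inter_left_comm B A C]
  ring

lemma le_phiCoef (P : Measure Ω) [IsFiniteMeasure P] {G H : MeasurableSpace Ω} {Γ Δ : Set Ω}
    (hΓ : MeasurableSet[G] Γ) (hΔ : MeasurableSet[H] Δ) (h0 : P Γ ≠ 0) :
    |P.real (Γ ∩ Δ) / P.real Γ - P.real Δ| ≤ @phiCoef Ω mΩ P G H := by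
  refine le_csSup ⟨1 + P.real univ, ?_⟩ ⟨Γ, Δ, hΓ, hΔ, h0, rfl⟩
  rintro _ ⟨Γ', Δ', -, -, -, rfl⟩
  change |P.real (Γ' ∩ Δ') / P.real Γ' - P.real Δ'| ≤ 1 + P.real univ
  have hratio : P.real (Γ' ∩ Δ') / P.real Γ' ≤ 1 :=
    div_le_one_of_le₀ (measureReal_mono inter_subset_left) measureReal_nonneg
  have hratio₀ : 0 ≤ P.real (Γ' ∩ Δ') / P.real Γ' := by positivity
  have hΔ' : P.real Δ' ≤ P.real univ := measureReal_mono (subset_univ Δ')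
  have hΔ'₀ : 0 ≤ P.real Δ' := measureReal_nonneg
  rw [abs_sub_le_iff]
  constructor <;> linarith

lemma phiCoef_nonneg (P : Measure Ω) [IsFiniteMeasure P] [NeZero P] (G H : MeasurableSpace Ω) :
    0 ≤ @phiCoef Ω mΩ P G H :=
  (abs_nonneg _).trans <|
    le_phiCoef P (G := G) (H := H) MeasurableSet.univ MeasurableSet.univ (NeZero.ne (P univ))

lemma abs_indepGap_le_of_phiCoef_le (P : Measure Ω) [IsFiniteMeasure P]
    {G H : MeasurableSpace Ω} {δ : ℝ} (hφ : @phiCoef Ω mΩ P G H ≤ δ) {Γ Δ : Set Ω}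
    (hΓ : MeasurableSet[G] Γ) (hΔ : MeasurableSet[H] Δ) :
    |indepGap P Γ Δ| ≤ δ * P.real Γ := by
  by_cases h0 : P Γ = 0
  · have hΓΔ : P (Γ ∩ Δ) = 0 := measure_mono_null inter_subset_left h0
    simp [indepGap, measureReal_def, h0, hΓΔ]
  have hpos : 0 < P.real Γ := ENNReal.toReal_pos h0 (measure_ne_top P Γ)
  have hgap : indepGap P Γ Δ = P.real Γ * (P.real (Γ ∩ Δ) / P.real Γ - P.real Δ) := by
    rw [indepGap]; field_simp
  rw [hgap, abs_mul, abs_of_pos hpos, mul_comm]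
  exact mul_le_mul_of_nonneg_right ((le_phiCoef P hΓ hΔ h0).trans hφ) hpos.le

lemma abs_indepGap_inter_le (P : Measure Ω) [IsProbabilityMeasure P]
    {F1 F2 F3 : MeasurableSpace Ω} {δ : ℝ} (hφ1 : @phiCoef Ω mΩ P F1 (F2 ⊔ F3) ≤ δ)
    (hφ2 : @phiCoef Ω mΩ P F2 F3 ≤ δ) {A B C : Set Ω} (hA : MeasurableSet[F1] A)
    (hB : MeasurableSet[F2] B) (hC : MeasurableSet[F3] C) :
    |indepGap P B (A ∩ C)| ≤ 3 * δ * P.real A := by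
  have hδ : 0 ≤ δ := (phiCoef_nonneg P F2 F3).trans hφ2
  have hABC := abs_indepGap_le_of_phiCoef_le P hφ1 hA ((le_sup_left (b := F3) _ hB).inter
    (le_sup_right (a := F2) _ hC))
  have hBC := abs_indepGap_le_of_phiCoef_le P hφ2 hB hC
  have hAC := abs_indepGap_le_of_phiCoef_le P hφ1 hA (le_sup_right (a := F2) _ hC)
  have hPA : 0 ≤ P.real A := measureReal_nonneg
  have hPB : 0 ≤ P.real B := measureReal_nonneg
  have hPB₁ : P.real B ≤ 1 := measureReal_le_one
  rw [indepGap_inter_eq]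
  calc |indepGap P A (B ∩ C) + P.real A * indepGap P B C - P.real B * indepGap P A C|
      ≤ |indepGap P A (B ∩ C)| + P.real A * |indepGap P B C| + P.real B * |indepGap P A C| := by
        simpa only [abs_neg, abs_mul, abs_of_nonneg hPA, abs_of_nonneg hPB, ← sub_eq_add_neg]
          using abs_add_three (indepGap P A (B ∩ C)) (P.real A * indepGap P B C)
            (-(P.real B * indepGap P A C))
    _ ≤ δ * P.real A + P.real A * (δ * P.real B) + P.real B * (δ * P.real A) := by gcongr
    _ ≤ 3 * δ * P.real A := by nlinarith [mul_nonneg hδ hPA]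

/-- Finite disjoint unions `⋃ i, π ⁻¹' {i} ∩ C i` of rectangles over a finite `m₁`-partition. -/
def rectangleAlgebra (m₁ m₂ : MeasurableSpace Ω) : Set (Set Ω) :=
  {s | ∃ (ι : Type) (_ : Fintype ι) (π : Ω → ι) (C : ι → Set Ω),
    (∀ i, MeasurableSet[m₁] (π ⁻¹' {i})) ∧ (∀ i, MeasurableSet[m₂] (C i)) ∧
    s = {x | x ∈ C (π x)}}

lemma setOf_mem_comp_eq_iUnion {ι : Type*} (π : Ω → ι) (C : ι → Set Ω) :
    {x | x ∈ C (π x)} = ⋃ i, π ⁻¹' {i} ∩ C i := by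
  ext x; simp

lemma isSetAlgebra_rectangleAlgebra (m₁ m₂ : MeasurableSpace Ω) :
    IsSetAlgebra (rectangleAlgebra m₁ m₂) where
  empty_mem := ⟨Unit, inferInstance, fun _ => (), fun _ => ∅, fun _ => by simp, fun _ => by simp,
    by simp⟩
  compl_mem := by
    rintro _ ⟨ι, _, π, C, hπ, hC, rfl⟩
    exact ⟨ι, inferInstance, π, fun i => (C i)ᶜ, hπ, fun i => (hC i).compl, rfl⟩
  union_mem := by
    rintro _ _ ⟨ι, _, π, C, hπ, hC, rfl⟩ ⟨κ, _, ρ, D, hρ, hD, rfl⟩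
    refine ⟨ι × κ, inferInstance, fun x => (π x, ρ x), fun p => C p.1 ∪ D p.2, fun p => ?_,
      fun p => (hC p.1).union (hD p.2), rfl⟩
    have hfiber : (fun x => (π x, ρ x)) ⁻¹' {p} = π ⁻¹' {p.1} ∩ ρ ⁻¹' {p.2} := by
      ext x; simp [Prod.ext_iff]
    rw [hfiber]
    exact (hπ p.1).inter (hρ p.2)

lemma generateFrom_rectangleAlgebra (m₁ m₂ : MeasurableSpace Ω) :
    generateFrom (rectangleAlgebra m₁ m₂) = m₁ ⊔ m₂ := by
  refine le_antisymm (generateFrom_le ?_) (sup_le (fun s hs => ?_) (fun s hs => ?_))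
  · rintro _ ⟨ι, _, π, C, hπ, hC, rfl⟩
    rw [setOf_mem_comp_eq_iUnion]
    exact .iUnion fun i => (le_sup_left (b := m₂) _ (hπ i)).inter (le_sup_right (a := m₁) _ (hC i))
  · classical
    refine measurableSet_generateFrom ⟨Bool, inferInstance, fun x => decide (x ∈ s),
      fun b => if b then univ else ∅, fun b => ?_, fun b => ?_, ?_⟩
    · cases b
      · convert hs.compl using 1; ext x; simp
      · convert hs using 1; ext x; simp
    · cases b <;> simp
    · ext x; by_cases hx : x ∈ s <;> simp [hx]
  · exact measurableSet_generateFrom ⟨Unit, inferInstance, fun _ => (), fun _ => s,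
      fun _ => by simp, fun _ => hs, by simp⟩

lemma abs_indepGap_le_of_mem_rectangleAlgebra (P : Measure Ω) [IsProbabilityMeasure P]
    {F1 F2 F3 : MeasurableSpace Ω} (h1 : F1 ≤ mΩ) (h3 : F3 ≤ mΩ) {δ : ℝ}
    (hφ1 : @phiCoef Ω mΩ P F1 (F2 ⊔ F3) ≤ δ) (hφ2 : @phiCoef Ω mΩ P F2 F3 ≤ δ) {B s : Set Ω}
    (hB : MeasurableSet[F2] B) (hs : s ∈ rectangleAlgebra F1 F3) :
    |indepGap P B s| ≤ 3 * δ := by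
  obtain ⟨ι, _, π, C, hπ, hC, rfl⟩ := hs
  have hcell : ∀ i, MeasurableSet[mΩ] (π ⁻¹' {i}) := fun i => h1 _ (hπ i)
  have hcells : ∑ i, P.real (π ⁻¹' {i}) = 1 := by
    rw [← measureReal_iUnion_fintype (pairwise_disjoint_fiber π) hcell,
      iUnion_eq_univ_iff.2 fun x => ⟨π x, rfl⟩, probReal_univ]
  rw [setOf_mem_comp_eq_iUnion, indepGap_iUnion_fintype P B
    (fun i j hij => (pairwise_disjoint_fiber π hij).mono inter_subset_left inter_subset_left)
    (fun i => (hcell i).inter (h3 _ (hC i)))]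
  calc |∑ i, indepGap P B (π ⁻¹' {i} ∩ C i)|
      ≤ ∑ i, |indepGap P B (π ⁻¹' {i} ∩ C i)| := Finset.abs_sum_le_sum_abs _ _
    _ ≤ ∑ i, 3 * δ * P.real (π ⁻¹' {i}) :=
        Finset.sum_le_sum fun i _ => abs_indepGap_inter_le P hφ1 hφ2 (hπ i) hB (hC i)
    _ = 3 * δ := by rw [← Finset.mul_sum, hcells, mul_one]

lemma alphaCoef_le_of_forall (P : Measure Ω) {G H : MeasurableSpace Ω} {c : ℝ}
    (h : ∀ Γ Δ, MeasurableSet[G] Γ → MeasurableSet[H] Δ → |indepGap P Γ Δ| ≤ c) :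
    @alphaCoef Ω mΩ P G H ≤ c :=
  csSup_le ⟨_, ∅, ∅, @MeasurableSet.empty _ G, @MeasurableSet.empty _ H, rfl⟩
    fun _ ⟨Γ, Δ, hΓ, hΔ, hx⟩ => hx ▸ h Γ Δ hΓ hΔ

end

theorem alpha_le_three_phi_general
    {Ω : Type*} [mΩ : MeasurableSpace Ω] (P : Measure Ω) [IsProbabilityMeasure P]
    (F1 F2 F3 : MeasurableSpace Ω)
    (h1 : F1 ≤ mΩ) (h3 : F3 ≤ mΩ)
    (δ : ℝ)
    (hφ1 : @phiCoef Ω mΩ P F1 (F2 ⊔ F3) ≤ δ)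
    (hφ2 : @phiCoef Ω mΩ P F2 F3 ≤ δ) :
    @alphaCoef Ω mΩ P F2 (F1 ⊔ F3) ≤ 3 * δ := by
  have hgen := generateFrom_rectangleAlgebra F1 F3
  refine alphaCoef_le_of_forall P fun B Δ hB hΔ => ?_
  exact abs_indepGap_le_of_isSetAlgebra P (isSetAlgebra_rectangleAlgebra F1 F3)
    (hgen ▸ sup_le h1 h3) B
    (fun t ht => abs_indepGap_le_of_mem_rectangleAlgebra P h1 h3 hφ1 hφ2 hB ht) (hgen ▸ hΔ)

/-- Lemma 3.3: if `φ(ℱ₁, σ(ℱ₂,ℱ₃)) ≤ δ` and `φ(ℱ₂,ℱ₃) ≤ δ` then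
`α(ℱ₂, σ(ℱ₁,ℱ₃)) ≤ 3δ`. -/
theorem alpha_le_three_phi
    {Ω : Type*} [mΩ : MeasurableSpace Ω] (P : Measure Ω) [IsProbabilityMeasure P]
    (F1 F2 F3 : MeasurableSpace Ω)
    (h1 : F1 ≤ mΩ) (h2 : F2 ≤ mΩ) (h3 : F3 ≤ mΩ)
    (δ : ℝ) (hδ : 0 ≤ δ)
    (hφ1 : @phiCoef Ω mΩ P F1 (F2 ⊔ F3) ≤ δ)
    (hφ2 : @phiCoef Ω mΩ P F2 F3 ≤ δ) :
    @alphaCoef Ω mΩ P F2 (F1 ⊔ F3) ≤ 3 * δ :=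
  alpha_le_three_phi_general (mΩ := mΩ) P F1 F2 F3 h1 h3 δ hφ1 hφ2
end

section
/- Let D ∈ ℱ_{0,n−1} and E ∈ ℱ_{0,m−1} be nonempty sets, and let k ≥ 0 and 0 ≤ r < m be integers with k + r ≥ n. Then P(D ∩ T^{−k}E) ≤ P(D)·( P(T^r E) + φ(k + r − n + 1) ). -/
open MeasureTheory Filter Set

/-- Total variation distance `d_TV(μ,ν) = sup_G |μ(G) − ν(G)|`. -/
noncomputable def dTV {α : Type*} [MeasurableSpace α] (μ ν : Measure α) : ℝ :=
  sSup {x | ∃ s : Set α, MeasurableSet s ∧ x = |(μ s).toReal - (ν s).toReal|}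

/-- Geometric distribution on ℕ with `Geo(ρ){k} = ρ(1−ρ)^k`. -/
noncomputable def geoMeasure (ρ : ℝ) : Measure ℕ :=
  Measure.sum fun k => ENNReal.ofReal (ρ * (1 - ρ) ^ k) • Measure.dirac k

/-- First hitting time `τ_V(ω) = min{k ≥ 1 : T^k ω ∈ V}` (junk value 0 if no such k). -/
noncomputable def hitTime {Ω : Type*} (T : Ω → Ω) (V : Set Ω) (ω : Ω) : ℕ :=
  sInf {k | 1 ≤ k ∧ T^[k] ω ∈ V}

/-- `Σ_{U,V} = Σ_{k=0}^{τ_V−1} 1_U ∘ T^k`. -/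
noncomputable def numVisits {Ω : Type*} (T : Ω → Ω) (U V : Set Ω) (ω : Ω) : ℕ :=
  ∑ k ∈ Finset.range (hitTime T V ω), U.indicator (fun _ => 1) (T^[k] ω)

/-- σ-algebra on the sequence space generated by the coordinates in `s`. -/
noncomputable def coordAlg (𝓐 : Type*) [m𝓐 : MeasurableSpace 𝓐] (s : Set ℕ) :
    MeasurableSpace (ℕ → 𝓐) :=
  ⨆ i ∈ s, m𝓐.comap fun ω => ω i

/-- `φ(n) = sup_{m≥0} φ(ℱ_{0,m}, ℱ_{m+n,∞})`. -/
noncomputable def phiMix (𝓐 : Type*) [MeasurableSpace 𝓐] (P : Measure (ℕ → 𝓐)) (n : ℕ) : ℝ :=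
  ⨆ m : ℕ, phiCoef P (coordAlg 𝓐 (Set.Iic m)) (coordAlg 𝓐 (Set.Ici (m + n)))

/-- `φ` extended to ℤ by `φ(k) = 1` for `k ≤ 0`. -/
noncomputable def phiMixZ (𝓐 : Type*) [MeasurableSpace 𝓐] (P : Measure (ℕ → 𝓐)) (j : ℤ) : ℝ :=
  if j ≤ 0 then 1 else phiMix 𝓐 P j.toNat

/-- The left shift on `𝓐^ℕ`. -/
def shift (𝓐 : Type*) : (ℕ → 𝓐) → (ℕ → 𝓐) := fun ω n => ω (n + 1)

/-- `π(U) = min{1 ≤ k ≤ n : U ∩ T^{−k}U ≠ ∅}`. -/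
noncomputable def piRet {Ω : Type*} (T : Ω → Ω) (n : ℕ) (U : Set Ω) : ℕ :=
  sInf {k | 1 ≤ k ∧ k ≤ n ∧ (U ∩ T^[k] ⁻¹' U).Nonempty}

/-- `π(U,V) = min{0 ≤ k ≤ min(n,m) : U ∩ T^{−k}V ≠ ∅ or V ∩ T^{−k}U ≠ ∅}`. -/
noncomputable def piJoint {Ω : Type*} (T : Ω → Ω) (n m : ℕ) (U V : Set Ω) : ℕ :=
  sInf {k | k ≤ min n m ∧ ((U ∩ T^[k] ⁻¹' V).Nonempty ∨ (V ∩ T^[k] ⁻¹' U).Nonempty)}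

/-- `κ_{U,V} = min(π(U,V), π(U), π(V))`. -/
noncomputable def kappa {Ω : Type*} (T : Ω → Ω) (n m : ℕ) (U V : Set Ω) : ℕ :=
  min (piJoint T n m U V) (min (piRet T n U) (piRet T m V))

/-!
Since `T^r` maps `T^{-k}E` into `T^{-(k+r)}(T^r E)`, it suffices to bound
`P(D ∩ T^{-(k+r)}(T^r E))`. Here `D` depends on the coordinates `< n` and
`T^{-(k+r)}(T^r E)` on the coordinates `≥ k + r`, a gap of `k + r + 1 - n`, so φ-mixing gives
`P(D)(P(T^{-(k+r)}(T^r E)) + φ(k + r + 1 - n))`, and shift invariance removes `T^{-(k+r)}`.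
The set `T^r E` is measurable because it is the countable union, over the first `r` letters,
of preimages of `E`.
-/

section Shift

variable {𝓐 : Type*}

lemma shift_iterate_apply (j : ℕ) (ω : ℕ → 𝓐) (i : ℕ) : (shift 𝓐)^[j] ω i = ω (i + j) := by
  induction j generalizing ω with
  | zero => rfl
  | succ j ih =>
    rw [Function.iterate_succ_apply, ih, shift, Nat.add_right_comm, Nat.add_assoc, Nat.add_comm 1]

def prepend {r : ℕ} (a : Fin r → 𝓐) (η : ℕ → 𝓐) : ℕ → 𝓐 :=
  fun i => if h : i < r then a ⟨i, h⟩ else η (i - r)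

lemma shift_iterate_prepend {r : ℕ} (a : Fin r → 𝓐) (η : ℕ → 𝓐) :
    (shift 𝓐)^[r] (prepend a η) = η := by
  funext i
  rw [shift_iterate_apply, prepend, dif_neg (by omega), Nat.add_sub_cancel]

lemma prepend_shift_iterate (r : ℕ) (ω : ℕ → 𝓐) :
    prepend (fun i : Fin r => ω i) ((shift 𝓐)^[r] ω) = ω := by
  funext i
  unfold prepend
  split_ifs with h
  · rfl
  · rw [shift_iterate_apply]; congr 1; omega

lemma shift_iterate_image_eq_iUnion (r : ℕ) (E : Set (ℕ → 𝓐)) :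
    (shift 𝓐)^[r] '' E = ⋃ a : Fin r → 𝓐, prepend a ⁻¹' E := by
  ext η
  simp only [mem_image, mem_iUnion, mem_preimage]
  constructor
  · rintro ⟨ω, hω, rfl⟩
    exact ⟨fun i => ω i, by rwa [prepend_shift_iterate]⟩
  · rintro ⟨a, ha⟩
    exact ⟨prepend a η, ha, shift_iterate_prepend a η⟩

variable [MeasurableSpace 𝓐]

lemma coordAlg_mono {s t : Set ℕ} (hst : s ⊆ t) : coordAlg 𝓐 s ≤ coordAlg 𝓐 t :=
  biSup_mono fun _ hi => hst hi

lemma coordAlg_le_pi (s : Set ℕ) : coordAlg 𝓐 s ≤ MeasurableSpace.pi :=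
  iSup₂_le fun i _ => (measurable_pi_apply i).comap_le

lemma measurable_shift_iterate (j : ℕ) :
    Measurable[coordAlg 𝓐 (Ici j)] ((shift 𝓐)^[j]) := by
  refine @measurable_pi_lambda _ _ _ (coordAlg 𝓐 (Ici j)) _ _ fun i => ?_
  simp only [shift_iterate_apply]
  exact Measurable.of_comap_le <|
    le_biSup (fun i => MeasurableSpace.comap (fun ω : ℕ → 𝓐 => ω i) ‹_›) (Nat.le_add_left j i)

lemma measurable_prepend {r : ℕ} (a : Fin r → 𝓐) : Measurable (prepend a) := by
  refine measurable_pi_lambda _ fun i => ?_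
  unfold prepend
  split_ifs
  · exact measurable_const
  · exact measurable_pi_apply _

lemma MeasurableSet.shift_iterate_image [Countable 𝓐] (r : ℕ) {E : Set (ℕ → 𝓐)}
    (hE : MeasurableSet E) : MeasurableSet ((shift 𝓐)^[r] '' E) := by
  rw [shift_iterate_image_eq_iUnion]
  exact .iUnion fun a => measurable_prepend a hE

end Shift

section PhiMixing

variable {Ω : Type*} {G H : MeasurableSpace Ω} [MeasurableSpace Ω] (P : Measure Ω)
  [IsProbabilityMeasure P]

lemma abs_div_measure_sub_measure_le_one (Γ Δ : Set Ω) :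
    |(P (Γ ∩ Δ)).toReal / (P Γ).toReal - (P Δ).toReal| ≤ 1 :=
  abs_sub_le_of_nonneg_of_le (by positivity)
    (div_le_one_of_le₀ (ENNReal.toReal_mono (measure_ne_top P Γ)
      (measure_mono inter_subset_left)) ENNReal.toReal_nonneg)
    ENNReal.toReal_nonneg (ENNReal.toReal_le_of_le_ofReal zero_le_one (by simp [prob_le_one]))

lemma phiCoef_le_one : phiCoef P G H ≤ 1 :=
  Real.sSup_le (by rintro _ ⟨Γ, Δ, -, -, -, rfl⟩; exact abs_div_measure_sub_measure_le_one P Γ Δ)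
    zero_le_one

lemma measure_inter_le_phiCoef {Γ Δ : Set Ω}
    (hΓ : MeasurableSet[G] Γ) (hΔ : MeasurableSet[H] Δ) :
    (P (Γ ∩ Δ)).toReal ≤ (P Γ).toReal * ((P Δ).toReal + phiCoef P G H) := by
  by_cases hΓ0 : P Γ = 0
  · simp [hΓ0, measure_mono_null inter_subset_left hΓ0]
  have hPΓ : 0 < (P Γ).toReal := ENNReal.toReal_pos hΓ0 (measure_ne_top P Γ)
  have hdev : |(P (Γ ∩ Δ)).toReal / (P Γ).toReal - (P Δ).toReal| ≤ phiCoef P G H :=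
    le_csSup ⟨1, by rintro _ ⟨Γ', Δ', -, -, -, rfl⟩; exact abs_div_measure_sub_measure_le_one P Γ' Δ'⟩
      ⟨Γ, Δ, hΓ, hΔ, hΓ0, rfl⟩
  have hcond : (P (Γ ∩ Δ)).toReal / (P Γ).toReal ≤ (P Δ).toReal + phiCoef P G H := by
    linarith [le_abs_self ((P (Γ ∩ Δ)).toReal / (P Γ).toReal - (P Δ).toReal)]
  rwa [div_le_iff₀' hPΓ] at hcond

end PhiMixing

lemma phiCoef_le_phiMix {𝓐 : Type*} [MeasurableSpace 𝓐] (P : Measure (ℕ → 𝓐))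
    [IsProbabilityMeasure P] (a j : ℕ) :
    phiCoef P (coordAlg 𝓐 (Iic a)) (coordAlg 𝓐 (Ici (a + j))) ≤ phiMix 𝓐 P j :=
  le_ciSup (f := fun a => phiCoef P (coordAlg 𝓐 (Iic a)) (coordAlg 𝓐 (Ici (a + j))))
    ⟨1, by rintro _ ⟨a, rfl⟩; exact phiCoef_le_one P⟩ a

lemma measure_inter_le_phiMix {𝓐 : Type*} [MeasurableSpace 𝓐] (P : Measure (ℕ → 𝓐))
    [IsProbabilityMeasure P] {a j : ℕ} {Γ Δ : Set (ℕ → 𝓐)}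
    (hΓ : MeasurableSet[coordAlg 𝓐 (Iic a)] Γ) (hΔ : MeasurableSet[coordAlg 𝓐 (Ici (a + j))] Δ) :
    (P (Γ ∩ Δ)).toReal ≤ (P Γ).toReal * ((P Δ).toReal + phiMix 𝓐 P j) :=
  (measure_inter_le_phiCoef P hΓ hΔ).trans <| mul_le_mul_of_nonneg_left
    (add_le_add_right (phiCoef_le_phiMix P a j) _) ENNReal.toReal_nonneg

theorem shifted_intersection_phi_bound_general
    {𝓐 : Type*} [MeasurableSpace 𝓐] [Countable 𝓐]
    (P : Measure (ℕ → 𝓐)) [IsProbabilityMeasure P]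
    (hinv : MeasurePreserving (shift 𝓐) P P)
    (n m k r : ℕ) (hn : 1 ≤ n) (hkr : n ≤ k + r)
    (D E : Set (ℕ → 𝓐))
    (hD : MeasurableSet[coordAlg 𝓐 (Set.Iio n)] D)
    (hE : MeasurableSet[coordAlg 𝓐 (Set.Iio m)] E) :
    (P (D ∩ (shift 𝓐)^[k] ⁻¹' E)).toReal
      ≤ (P D).toReal *
        ((P ((shift 𝓐)^[r] '' E)).toReal + phiMix 𝓐 P (k + r + 1 - n)) := by
  set F := (shift 𝓐)^[r] '' E
  have hF : MeasurableSet F := .shift_iterate_image r (coordAlg_le_pi _ E hE)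
  have hsub : (shift 𝓐)^[k] ⁻¹' E ⊆ (shift 𝓐)^[k + r] ⁻¹' F := fun ω hω =>
    ⟨_, hω, by rw [add_comm, Function.iterate_add_apply]⟩
  have hD' : MeasurableSet[coordAlg 𝓐 (Iic (n - 1))] D :=
    coordAlg_mono (fun i hi => by simp only [mem_Iio, mem_Iic] at hi ⊢; omega) D hD
  have hgap : n - 1 + (k + r + 1 - n) = k + r := by omega
  calc (P (D ∩ (shift 𝓐)^[k] ⁻¹' E)).toReal
      ≤ (P (D ∩ (shift 𝓐)^[k + r] ⁻¹' F)).toReal :=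
        ENNReal.toReal_mono (measure_ne_top P _) (measure_mono (inter_subset_inter_right D hsub))
    _ ≤ (P D).toReal * ((P ((shift 𝓐)^[k + r] ⁻¹' F)).toReal + phiMix 𝓐 P (k + r + 1 - n)) :=
        measure_inter_le_phiMix P hD' (by rw [hgap]; exact measurable_shift_iterate (k + r) hF)
    _ = (P D).toReal * ((P F).toReal + phiMix 𝓐 P (k + r + 1 - n)) := by
        rw [(hinv.iterate (k + r)).measure_preimage hF.nullMeasurableSet]

/-- The inequality (4.7): for nonempty `D ∈ ℱ_{0,n−1}`, `E ∈ ℱ_{0,m−1}`, `0 ≤ r < m`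
and `k + r ≥ n`, one has `P(D ∩ T^{−k}E) ≤ P(D)(P(T^r E) + φ(k+r−n+1))`. -/
theorem shifted_intersection_phi_bound
    {𝓐 : Type*} [MeasurableSpace 𝓐] [DiscreteMeasurableSpace 𝓐] [Countable 𝓐] [Nontrivial 𝓐]
    (P : Measure (ℕ → 𝓐)) [IsProbabilityMeasure P]
    (hinv : MeasurePreserving (shift 𝓐) P P)
    (n m k r : ℕ) (hn : 1 ≤ n) (hm : 1 ≤ m) (hr : r < m) (hkr : n ≤ k + r)
    (D E : Set (ℕ → 𝓐))
    (hD : MeasurableSet[coordAlg 𝓐 (Set.Iio n)] D) (hDne : D.Nonempty)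
    (hE : MeasurableSet[coordAlg 𝓐 (Set.Iio m)] E) (hEne : E.Nonempty) :
    (P (D ∩ (shift 𝓐)^[k] ⁻¹' E)).toReal
      ≤ (P D).toReal *
        ((P ((shift 𝓐)^[r] '' E)).toReal + phiMix 𝓐 P (k + r + 1 - n)) :=
  shifted_intersection_phi_bound_general P hinv n m k r hn hkr D E hD hE
end
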